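/- arXiv:1605.02995 — 4 statements merged into one kernel-verified Lean document; each statement's English description precedes it below -/
import Mathlib

section
/- Let M_0 = m_0, M_1, …, M_k be a martingale such that for each 1 ≤ i ≤ k, Var[M_i | M_{i-1},…,M_0] ≤ σ_i² and |M_i - M_{i-1}| ≤ m for some positive m. Then for any λ > 0, P[M_k - M_0 ≥ λ] ≤ exp(-λ²/(2(∑_{i=1}^k σ_i² + mλ/3))). -/
open MeasureTheory ProbabilityTheory Finset Real

/-!
Bernstein's method. For a martingale difference `X` with `|X| ≤ m`, conditional variance at
most `σ²` and `0 ≤ s < 3 / m`, the elementary bound `exp y ≤ 1 + y + c y² / s²` for `y ≤ s m`,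
where `c = s² / (2 (1 - s m / 3))`, gives `E[exp (s X) | ℱ] ≤ 1 + c σ² ≤ exp (c σ²)`.
Conditioning on `ℱ (n - 1)` peels off one increment at a time, which bounds the moment
generating function of `M k - M 0` by `exp (c V)` with `V = ∑ σ i²`; Chernoff's bound with
`s = λ / (V + m λ / 3)` gives the claim.
-/

lemma monotoneOn_Ici_of_hasDerivAt_nonneg {f f' : ℝ → ℝ} {a : ℝ}
    (hf : ∀ x, HasDerivAt f (f' x) x) (hf' : ∀ x, a ≤ x → 0 ≤ f' x) :
    MonotoneOn f (Set.Ici a) :=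
  monotoneOn_of_hasDerivWithinAt_nonneg (convex_Ici a)
    (fun x _ => (hf x).continuousAt.continuousWithinAt) (fun x _ => (hf x).hasDerivWithinAt)
    (fun x hx => hf' x (by rw [interior_Ici] at hx; exact le_of_lt hx))

lemma exp_neg_le_one_sub_add_sq_div_two {t : ℝ} (ht : 0 ≤ t) :
    exp (-t) ≤ 1 - t + t ^ 2 / 2 := by
  have hderiv (x : ℝ) : HasDerivAt (fun t => 1 - t + t ^ 2 / 2 - exp (-t))
      (-1 + x + exp (-x)) x := by
    refine ((((hasDerivAt_id x).const_sub 1).add ((hasDerivAt_pow 2 x).div_const 2)).sub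
      (hasDerivAt_neg x).exp).congr_deriv ?_
    norm_num
  have := monotoneOn_Ici_of_hasDerivAt_nonneg hderiv
    (fun x _ => by linarith [one_sub_le_exp_neg x]) Set.self_mem_Ici ht ht
  simp only [neg_zero, exp_zero] at this
  linarith

lemma three_sub_mul_exp_sub_one_sub_le {y : ℝ} (hy : 0 ≤ y) :
    (3 - y) * (exp y - 1 - y) ≤ 3 * y ^ 2 / 2 := by
  -- the difference of the two sides and its first derivative vanish at `0`
  have hderiv₂ (x : ℝ) : HasDerivAt (fun y => (y - 2) * exp y + y + 2)
      ((x - 1) * exp x + 1) x := by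
    refine (((((hasDerivAt_id x).sub_const 2).mul (hasDerivAt_exp x)).add
      (hasDerivAt_id x)).add_const 2).congr_deriv ?_
    norm_num; ring
  have hderiv₁ (x : ℝ) : HasDerivAt (fun y => 3 * y ^ 2 / 2 - (3 - y) * (exp y - 1 - y))
      ((x - 2) * exp x + x + 2) x := by
    refine ((((hasDerivAt_pow 2 x).const_mul 3).div_const 2).sub
      (((hasDerivAt_id x).const_sub 3).mul (((hasDerivAt_exp x).sub_const 1).sub
        (hasDerivAt_id x)))).congr_deriv ?_
    norm_num; ring
  -- `(1 - x) * exp x ≤ exp (-x) * exp x = 1`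
  have hsecond (x : ℝ) : 0 ≤ (x - 1) * exp x + 1 := by
    have : exp (-x) * exp x = 1 := by rw [← exp_add, neg_add_cancel, exp_zero]
    nlinarith [one_sub_le_exp_neg x, exp_pos x]
  have hfirst : ∀ x, 0 ≤ x → 0 ≤ (x - 2) * exp x + x + 2 := fun x hx => by
    simpa using monotoneOn_Ici_of_hasDerivAt_nonneg hderiv₂ (fun x _ => hsecond x)
      Set.self_mem_Ici hx hx
  have := monotoneOn_Ici_of_hasDerivAt_nonneg hderiv₁ hfirst Set.self_mem_Ici hy hy
  simp only [exp_zero] at this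
  linarith

lemma exp_le_one_add_add_sq_div {y b : ℝ} (hb₀ : 0 ≤ b) (hb₃ : b < 3) (hyb : y ≤ b) :
    exp y ≤ 1 + y + y ^ 2 / (2 * (1 - b / 3)) := by
  have hden : 0 < 2 * (1 - b / 3) := by linarith
  rcases le_total y 0 with hy | hy
  · have h := exp_neg_le_one_sub_add_sq_div_two (neg_nonneg.2 hy)
    rw [neg_neg] at h
    have : y ^ 2 / 2 ≤ y ^ 2 / (2 * (1 - b / 3)) :=
      div_le_div_of_nonneg_left (sq_nonneg y) hden (by linarith)
    nlinarith
  · have h := three_sub_mul_exp_sub_one_sub_le hy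
    have : exp y - 1 - y ≤ y ^ 2 / (2 * (1 - b / 3)) := by
      rw [le_div_iff₀ hden]
      nlinarith [add_one_le_exp y]
    linarith

/-- `s = t / (V + b t / 3)` minimises the left side and attains equality; for `V = 0` it would
violate `s * b < 3`, and `s = 3 / (2 b)` attains equality instead. -/
lemma exists_exponent_le_neg_sq_div {V b t : ℝ} (hV : 0 ≤ V) (hb : 0 < b) (ht : 0 < t) :
    ∃ s, 0 ≤ s ∧ s * b < 3 ∧
      s ^ 2 / (2 * (1 - s * b / 3)) * V - s * t ≤ -(t ^ 2) / (2 * (V + b * t / 3)) := by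
  rcases hV.eq_or_lt with rfl | hV
  · refine ⟨3 / (2 * b), by positivity, by field_simp; norm_num, le_of_eq ?_⟩
    field_simp
    ring
  · have hD : 0 < V + b * t / 3 := by positivity
    refine ⟨t / (V + b * t / 3), by positivity, ?_, le_of_eq ?_⟩
    · rw [div_mul_eq_mul_div, div_lt_iff₀ hD]
      nlinarith
    · have h : 1 - t / (V + b * t / 3) * b / 3 = V / (V + b * t / 3) := by
        field_simp; ring
      rw [h]
      field_simp
      ring

lemma abs_sub_le_mul_of_abs_sub_succ_le {a : ℕ → ℝ} {b : ℝ} {n : ℕ}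
    (h : ∀ i < n, |a (i + 1) - a i| ≤ b) : |a n - a 0| ≤ n * b := by
  calc |a n - a 0| = dist (a 0) (a n) := by rw [Real.dist_eq, abs_sub_comm]
    _ ≤ ∑ i ∈ range n, dist (a i) (a (i + 1)) := by
      simpa using dist_le_Ico_sum_dist a (Nat.zero_le n)
    _ ≤ ∑ _i ∈ range n, b := sum_le_sum fun i hi => by
      rw [Real.dist_eq, abs_sub_comm]; exact h i (mem_range.1 hi)
    _ = n * b := by simp

section

variable {Ω : Type*} {m m0 : MeasurableSpace Ω} {μ : Measure Ω}

lemma integrable_exp_mul_of_abs_le [IsFiniteMeasure μ] {X : Ω → ℝ} {b : ℝ}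
    (hX : AEStronglyMeasurable X μ) (hXb : ∀ ω, |X ω| ≤ b) {s : ℝ} (hs : 0 ≤ s) :
    Integrable (fun ω => exp (s * X ω)) μ :=
  Integrable.of_bound (continuous_exp.comp_aestronglyMeasurable (hX.const_mul s)) (exp (s * b))
    (ae_of_all _ fun ω => by
      rw [norm_of_nonneg (exp_pos _).le, exp_le_exp]
      exact mul_le_mul_of_nonneg_left (abs_le.1 (hXb ω)).2 hs)

lemma condExp_exp_mul_le [IsFiniteMeasure μ] (hm : m ≤ m0) {X : Ω → ℝ} {b s v : ℝ}
    (hX : AEStronglyMeasurable X μ) (hXb : ∀ ω, |X ω| ≤ b) (hs : 0 ≤ s) (hsb : s * b < 3)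
    (hmean : μ[X|m] =ᵐ[μ] 0) (hvar : μ[fun ω => X ω ^ 2|m] ≤ᵐ[μ] fun _ => v) :
    μ[fun ω => exp (s * X ω)|m] ≤ᵐ[μ] fun _ => exp (s ^ 2 / (2 * (1 - s * b / 3)) * v) := by
  set c := s ^ 2 / (2 * (1 - s * b / 3))
  have hc : 0 ≤ c := div_nonneg (sq_nonneg s) (by linarith)
  have hXint : Integrable X μ :=
    Integrable.of_bound hX b (ae_of_all _ fun ω => (Real.norm_eq_abs _).trans_le (hXb ω))
  have hX2int : Integrable (fun ω => X ω ^ 2) μ :=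
    Integrable.of_bound (hX.pow 2) (b ^ 2) (ae_of_all _ fun ω => by
      rw [Real.norm_eq_abs, abs_pow]
      exact pow_le_pow_left₀ (abs_nonneg _) (hXb ω) 2)
  have hpoint (ω : Ω) : exp (s * X ω) ≤ 1 + s * X ω + c * X ω ^ 2 := by
    have hb : 0 ≤ b := (abs_nonneg _).trans (hXb ω)
    have := exp_le_one_add_add_sq_div (mul_nonneg hs hb) hsb
      (mul_le_mul_of_nonneg_left (abs_le.1 (hXb ω)).2 hs)
    convert this using 2
    ring
  have hquad : Integrable (fun ω => 1 + s * X ω + c * X ω ^ 2) μ :=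
    ((integrable_const 1).add (hXint.const_mul s)).add (hX2int.const_mul c)
  have hlin : μ[fun ω => 1 + s * X ω + c * X ω ^ 2|m] =ᵐ[μ]
      fun ω => 1 + s * μ[X|m] ω + c * μ[fun ω => X ω ^ 2|m] ω := by
    have hsplit : (fun ω => 1 + s * X ω + c * X ω ^ 2) =
        (fun _ => (1 : ℝ)) + s • X + c • fun ω => X ω ^ 2 := rfl
    rw [hsplit]
    filter_upwards [condExp_add ((integrable_const 1).add (hXint.smul s)) (hX2int.smul c) m,
      condExp_add (integrable_const 1) (hXint.smul s) m, condExp_smul (μ := μ) s X m,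
      condExp_smul (μ := μ) c (fun ω => X ω ^ 2) m] with ω h₁ h₂ h₃ h₄
    simp_all [condExp_const hm]
  filter_upwards [condExp_mono (m := m) (integrable_exp_mul_of_abs_le hX hXb hs) hquad
    (ae_of_all _ hpoint), hlin, hmean, hvar] with ω hmono hlin hmean hvar
  calc μ[fun ω => exp (s * X ω)|m] ω ≤ 1 + c * v := by
        rw [hlin, hmean, Pi.zero_apply, mul_zero, add_zero] at hmono
        exact hmono.trans (by gcongr)
    _ ≤ exp (c * v) := by linarith [add_one_le_exp (c * v)]

lemma integral_mul_le_of_condExp_le [IsFiniteMeasure μ] (hm : m ≤ m0) {f g : Ω → ℝ} {B C : ℝ}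
    (hf : StronglyMeasurable[m] f) (hf₀ : ∀ ω, 0 ≤ f ω) (hfB : ∀ ω, f ω ≤ B)
    (hg : Integrable g μ) (hgC : μ[g|m] ≤ᵐ[μ] fun _ => C) :
    ∫ ω, f ω * g ω ∂μ ≤ C * ∫ ω, f ω ∂μ := by
  have hfB' : ∀ᵐ ω ∂μ, ‖f ω‖ ≤ B :=
    ae_of_all _ fun ω => (norm_of_nonneg (hf₀ ω)).trans_le (hfB ω)
  have hfint : Integrable f μ := Integrable.of_bound (hf.mono hm).aestronglyMeasurable B hfB'
  calc ∫ ω, f ω * g ω ∂μ = ∫ ω, f ω * μ[g|m] ω ∂μ := by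
        rw [← integral_condExp hm]
        exact integral_congr_ae (condExp_stronglyMeasurable_mul_of_bound hm hf hg B hfB')
    _ ≤ ∫ ω, f ω * C ∂μ :=
        integral_mono_ae (integrable_condExp.bdd_mul (hf.mono hm).aestronglyMeasurable hfB')
          (hfint.mul_const C)
          (hgC.mono fun ω hω => mul_le_mul_of_nonneg_left hω (hf₀ ω))
    _ = C * ∫ ω, f ω ∂μ := by rw [integral_mul_const, mul_comm]

namespace MeasureTheory.Martingale

variable {ℱ : Filtration ℕ m0} {M : ℕ → Ω → ℝ} {n : ℕ} {b s : ℝ} {v : ℕ → ℝ}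

lemma condExp_sub_ae_eq_zero [IsFiniteMeasure μ]
    (hM : Martingale M ℱ μ) {i j : ℕ} (hij : i ≤ j) : μ[M j - M i|ℱ i] =ᵐ[μ] 0 := by
  filter_upwards [condExp_sub (hM.integrable j) (hM.integrable i) (ℱ i), hM.condExp_ae_eq hij]
    with ω h₁ h₂
  rw [h₁, Pi.sub_apply, h₂, condExp_of_stronglyMeasurable (ℱ.le i) (hM.stronglyAdapted i)
    (hM.integrable i), sub_self, Pi.zero_apply]

lemma aestronglyMeasurable_sub (hM : Martingale M ℱ μ) (i j : ℕ) :
    AEStronglyMeasurable (fun ω => M i ω - M j ω) μ :=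
  (hM.integrable i).aestronglyMeasurable.sub (hM.integrable j).aestronglyMeasurable

lemma integral_exp_mul_sub_le [IsProbabilityMeasure μ] (hM : Martingale M ℱ μ) (hs : 0 ≤ s)
    (hsb : s * b < 3)
    (hdiff : ∀ i < n, ∀ ω, |M (i + 1) ω - M i ω| ≤ b)
    (hvar : ∀ i < n, μ[fun ω => (M (i + 1) ω - M i ω) ^ 2|ℱ i] ≤ᵐ[μ] fun _ => v i) :
    ∫ ω, exp (s * (M n ω - M 0 ω)) ∂μ ≤
      exp (s ^ 2 / (2 * (1 - s * b / 3)) * ∑ i ∈ range n, v i) := by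
  induction n with
  | zero => simp
  | succ n ih =>
    set c := s ^ 2 / (2 * (1 - s * b / 3))
    have hstep : μ[fun ω => exp (s * (M (n + 1) ω - M n ω))|ℱ n] ≤ᵐ[μ]
        fun _ => exp (c * v n) :=
      condExp_exp_mul_le (ℱ.le n) (hM.aestronglyMeasurable_sub _ _) (hdiff n n.lt_succ_self) hs
        hsb (hM.condExp_sub_ae_eq_zero n.le_succ) (hvar n n.lt_succ_self)
    have hprefix : ∀ ω, |M n ω - M 0 ω| ≤ n * b := fun ω =>
      abs_sub_le_mul_of_abs_sub_succ_le (a := fun i => M i ω) fun i hi =>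
        hdiff i (hi.trans n.lt_succ_self) ω
    calc ∫ ω, exp (s * (M (n + 1) ω - M 0 ω)) ∂μ
        = ∫ ω, exp (s * (M n ω - M 0 ω)) * exp (s * (M (n + 1) ω - M n ω)) ∂μ := by
          congr 1 with ω
          rw [← exp_add]; ring_nf
      _ ≤ exp (c * v n) * ∫ ω, exp (s * (M n ω - M 0 ω)) ∂μ :=
          integral_mul_le_of_condExp_le (ℱ.le n)
            (continuous_exp.comp_stronglyMeasurable (((hM.stronglyAdapted n).sub
              ((hM.stronglyAdapted 0).mono (ℱ.mono n.zero_le))).const_mul s))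
            (fun ω => (exp_pos _).le)
            (fun ω => exp_le_exp.2 (mul_le_mul_of_nonneg_left (abs_le.1 (hprefix ω)).2 hs))
            (integrable_exp_mul_of_abs_le (hM.aestronglyMeasurable_sub _ _)
              (hdiff n n.lt_succ_self) hs) hstep
      _ ≤ exp (c * v n) * exp (c * ∑ i ∈ range n, v i) := by
          gcongr
          exact ih (fun i hi => hdiff i (hi.trans n.lt_succ_self))
            (fun i hi => hvar i (hi.trans n.lt_succ_self))
      _ = exp (c * ∑ i ∈ range (n + 1), v i) := by
          rw [← exp_add, sum_range_succ]; ring_nf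

lemma measureReal_sub_ge_le [IsProbabilityMeasure μ] (hM : Martingale M ℱ μ) (hs : 0 ≤ s)
    (hsb : s * b < 3)
    (hdiff : ∀ i < n, ∀ ω, |M (i + 1) ω - M i ω| ≤ b)
    (hvar : ∀ i < n, μ[fun ω => (M (i + 1) ω - M i ω) ^ 2|ℱ i] ≤ᵐ[μ] fun _ => v i) (t : ℝ) :
    μ.real {ω | t ≤ M n ω - M 0 ω} ≤
      exp (s ^ 2 / (2 * (1 - s * b / 3)) * ∑ i ∈ range n, v i - s * t) := by
  have hbound (ω : Ω) : |M n ω - M 0 ω| ≤ n * b :=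
    abs_sub_le_mul_of_abs_sub_succ_le (a := fun i => M i ω) fun i hi => hdiff i hi ω
  calc μ.real {ω | t ≤ M n ω - M 0 ω}
      ≤ exp (-s * t) * mgf (fun ω => M n ω - M 0 ω) μ s :=
        measure_ge_le_exp_mul_mgf t hs
          (integrable_exp_mul_of_abs_le (hM.aestronglyMeasurable_sub _ _) hbound hs)
    _ ≤ exp (-s * t) * exp (s ^ 2 / (2 * (1 - s * b / 3)) * ∑ i ∈ range n, v i) := by
        gcongr
        exact hM.integral_exp_mul_sub_le hs hsb hdiff hvar
    _ = _ := by rw [← exp_add]; ring_nf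

end MeasureTheory.Martingale

end

/-- Chung–Lu martingale concentration: if `M 0, …, M k` is a martingale with
conditional variances `Var[M i | ℱ (i-1)] ≤ σ i ^ 2` and one-step differences
bounded by `m`, then `P[M k - M 0 ≥ λ] ≤ exp (-λ² / (2 (∑ σ i ² + m λ / 3)))`. -/
theorem martingale_chernoff
    {Ω : Type*} [m0 : MeasurableSpace Ω] {μ : Measure Ω} [IsProbabilityMeasure μ]
    (ℱ : Filtration ℕ m0) (M : ℕ → Ω → ℝ) (k : ℕ) (σ : ℕ → ℝ) (m : ℝ) (hm : 0 < m)
    (hmart : Martingale M ℱ μ)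
    (hvar : ∀ i, 1 ≤ i → i ≤ k →
      μ[fun ω => (M i ω - M (i - 1) ω) ^ 2|ℱ (i - 1)] ≤ᵐ[μ] fun _ => (σ i) ^ 2)
    (hdiff : ∀ i, 1 ≤ i → i ≤ k → ∀ ω, |M i ω - M (i - 1) ω| ≤ m)
    (lam : ℝ) (hlam : 0 < lam) :
    (μ {ω | M k ω - M 0 ω ≥ lam}).toReal ≤
      Real.exp (-(lam ^ 2) / (2 * (∑ i ∈ Finset.Icc 1 k, (σ i) ^ 2 + m * lam / 3))) := by
  have hdiff' : ∀ i < k, ∀ ω, |M (i + 1) ω - M i ω| ≤ m := fun i hi => by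
    simpa using hdiff (i + 1) (by omega) (by omega)
  have hvar' : ∀ i < k,
      μ[fun ω => (M (i + 1) ω - M i ω) ^ 2|ℱ i] ≤ᵐ[μ] fun _ => σ (i + 1) ^ 2 := fun i hi => by
    simpa using hvar (i + 1) (by omega) (by omega)
  have hsum : ∑ i ∈ Icc 1 k, σ i ^ 2 = ∑ i ∈ range k, σ (i + 1) ^ 2 := by
    rw [range_eq_Ico, sum_Ico_add' (fun i => σ i ^ 2), zero_add, Ico_add_one_right_eq_Icc]
  obtain ⟨s, hs, hsm, hopt⟩ :=
    exists_exponent_le_neg_sq_div (sum_nonneg fun i _ => sq_nonneg (σ (i + 1))) hm hlam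
  rw [hsum]
  exact (hmart.measureReal_sub_ge_le hs hsm hdiff' hvar' lam).trans (exp_le_exp.2 hopt)
end

section
/- Let r ≥ 2, p = p(n) with np → ∞ and p = o(n^{-1/r}), t_0 = (r!/(np^r))^{1/(r-1)}, t_1 = ((r-1)!/(np^r))^{1/(r-1)}, π̂(t) = P[Bin(t,p) ≥ r], and a_c = -min_{t ≤ t_0} (nπ̂(t) - t)/(1 - π̂(t)). Then a_c ≥ (t_1 - nπ̂(t_1))/(1 - π̂(t_1)) = (1+o(1))(1 - 1/r) t_1, and in particular a_c = Ω(t_0). -/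
open Filter Real Asymptotics Finset

/-- `P[Bin(t,p) ≥ r]` for a binomial with `t` trials and success probability `p`. -/
def binomTail (p : ℝ) (t r : ℕ) : ℝ :=
  ∑ j ∈ Finset.Icc r t, (t.choose j : ℝ) * p ^ j * (1 - p) ^ (t - j)

/-!
Put `m = ⌊t₁⌋`. Bounding the tail below by its first term and above by the union bound over
`r`-sets of successes squeezes `π̂(m)` between `C(m,r) pʳ (1 - m p)` and `C(m,r) pʳ`; since
`t₁ → ∞` and `t₁ p → 0` (the latter because `(t₁ p)^(r-1) = (r-1)!/(np)`), this gives
`π̂(m) ~ (t₁ p)ʳ / r!`. The defining relation `n pʳ t₁^(r-1) = (r-1)!` turns this into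
`n π̂(m) ~ t₁ / r`, while `π̂(m) → 0`, so `(m - n π̂(m))/(1 - π̂(m)) ~ (1 - 1/r) t₁`.
Finally `t₀ = r^(1/(r-1)) t₁ ≥ t₁`, so `m` is admissible in the minimum defining `a_c`.
-/

open Topology

section BinomTail

variable {q : ℝ}

lemma binomTail_eq_zero_of_lt {m r : ℕ} (h : m < r) : binomTail q m r = 0 := by
  rw [binomTail, Icc_eq_empty_of_lt h, sum_empty]

lemma binomTail_nonneg (hq0 : 0 ≤ q) (hq1 : q ≤ 1) (m r : ℕ) : 0 ≤ binomTail q m r :=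
  sum_nonneg fun j _ => mul_nonneg (by positivity) (pow_nonneg (sub_nonneg.2 hq1) _)

lemma choose_le_choose_mul_choose {m r j : ℕ} (hrj : r ≤ j) :
    m.choose j ≤ m.choose r * (m - r).choose (j - r) :=
  calc m.choose j ≤ m.choose j * j.choose r := Nat.le_mul_of_pos_right _ (Nat.choose_pos hrj)
    _ = m.choose r * (m - r).choose (j - r) := Nat.choose_mul hrj

lemma binomTail_le_choose_mul_pow (hq0 : 0 ≤ q) (hq1 : q ≤ 1) (m r : ℕ) :
    binomTail q m r ≤ m.choose r * q ^ r := by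
  rcases lt_or_ge m r with hmr | hrm
  · rw [binomTail_eq_zero_of_lt hmr]
    positivity
  have h1q : 0 ≤ 1 - q := sub_nonneg.2 hq1
  have hbinom : ∑ k ∈ range (m - r + 1), ((m - r).choose k : ℝ) * q ^ k * (1 - q) ^ (m - r - k)
      = 1 := by
    have h := (add_pow q (1 - q) (m - r)).symm
    rw [add_sub_cancel, one_pow] at h
    exact (sum_congr rfl fun k _ => by ring).trans h
  calc binomTail q m r
      ≤ ∑ j ∈ Icc r m, (m.choose r * (m - r).choose (j - r) : ℝ) * q ^ j * (1 - q) ^ (m - j) :=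
        sum_le_sum fun j hj => by
          gcongr
          exact_mod_cast choose_le_choose_mul_choose (mem_Icc.1 hj).1
    _ = m.choose r * q ^ r *
          ∑ k ∈ range (m - r + 1), ((m - r).choose k : ℝ) * q ^ k * (1 - q) ^ (m - r - k) := by
        rw [← Ico_add_one_right_eq_Icc, sum_Ico_eq_sum_range, mul_sum,
          show m + 1 - r = m - r + 1 by omega]
        refine sum_congr rfl fun k _ => ?_
        rw [show m - (r + k) = m - r - k by omega, add_tsub_cancel_left, pow_add]
        ring
    _ = m.choose r * q ^ r := by rw [hbinom, mul_one]

lemma choose_mul_pow_mul_one_sub_le_binomTail (hq0 : 0 ≤ q) (hq1 : q ≤ 1) (m r : ℕ) :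
    m.choose r * q ^ r * (1 - m * q) ≤ binomTail q m r := by
  rcases lt_or_ge m r with hmr | hrm
  · rw [Nat.choose_eq_zero_of_lt hmr, Nat.cast_zero, zero_mul, zero_mul]
    exact binomTail_nonneg hq0 hq1 m r
  have hbernoulli : 1 - m * q ≤ (1 - q) ^ (m - r) :=
    calc 1 - m * q ≤ 1 + ((m - r : ℕ) : ℝ) * -q := by
          rw [Nat.cast_sub hrm]; nlinarith [(Nat.cast_nonneg r : (0 : ℝ) ≤ r)]
      _ ≤ (1 - q) ^ (m - r) := by
          exact (one_add_mul_le_pow (by linarith) _).trans_eq (by ring)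
  calc m.choose r * q ^ r * (1 - m * q) ≤ m.choose r * q ^ r * (1 - q) ^ (m - r) := by
        gcongr
    _ ≤ binomTail q m r :=
        single_le_sum (f := fun j => (m.choose j : ℝ) * q ^ j * (1 - q) ^ (m - j))
          (fun j _ => mul_nonneg (by positivity) (pow_nonneg (sub_nonneg.2 hq1) _))
          (mem_Icc.2 ⟨le_rfl, hrm⟩)

end BinomTail

section RealLimits

variable {ι : Type*} {l : Filter ι} {f g : ι → ℝ}

lemma tendsto_atTop_of_tendsto_pow {k : ℕ} (hk : k ≠ 0) (hf : ∀ i, 0 ≤ f i)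
    (h : Tendsto (fun i => f i ^ k) l atTop) : Tendsto f l atTop := by
  have hroot := (tendsto_rpow_atTop (inv_pos.2 (Nat.cast_pos.2 (Nat.pos_of_ne_zero hk)))).comp h
  exact hroot.congr fun i => Real.pow_rpow_inv_natCast (hf i) hk

lemma tendsto_zero_of_tendsto_pow {k : ℕ} (hk : k ≠ 0) (hf : ∀ i, 0 ≤ f i)
    (h : Tendsto (fun i => f i ^ k) l (𝓝 0)) : Tendsto f l (𝓝 0) := by
  have hpos : (0 : ℝ) < (k : ℝ)⁻¹ := inv_pos.2 (Nat.cast_pos.2 (Nat.pos_of_ne_zero hk))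
  have hroot := ((Real.continuousAt_rpow_const 0 _ (Or.inr hpos.le)).tendsto).comp h
  rw [Real.zero_rpow hpos.ne'] at hroot
  exact hroot.congr fun i => Real.pow_rpow_inv_natCast (hf i) hk

lemma eventually_half_le_of_tendsto_div (h : Tendsto (fun i => f i / g i) l (𝓝 1))
    (hg : ∀ i, 0 ≤ g i) : ∀ᶠ i in l, g i / 2 ≤ f i := by
  filter_upwards [h.eventually (lt_mem_nhds one_half_lt_one)] with i hi
  rcases (hg i).eq_or_lt with hg0 | hg0
  · rw [← hg0, div_zero] at hi
    norm_num at hi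
  · rw [lt_div_iff₀ hg0] at hi
    linarith

end RealLimits

lemma tendsto_descFactorial_floor_div_pow (r : ℕ) :
    Tendsto (fun x : ℝ => (⌊x⌋₊.descFactorial r : ℝ) / x ^ r) atTop (𝓝 1) := by
  have hlower : Tendsto (fun x : ℝ => (1 - r / x) ^ r) atTop (𝓝 1) := by
    have h := ((tendsto_const_nhds (x := (1 : ℝ))).sub
      ((tendsto_const_nhds (x := (r : ℝ))).div_atTop tendsto_id)).pow r
    rwa [sub_zero, one_pow] at h
  refine tendsto_of_tendsto_of_tendsto_of_le_of_le' hlower tendsto_const_nhds ?_ ?_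
  · filter_upwards [eventually_ge_atTop (r : ℝ), eventually_gt_atTop 0] with x hrx hx
    have hrm : r ≤ ⌊x⌋₊ := Nat.le_floor hrx
    have hsub : x - r ≤ ((⌊x⌋₊ + 1 - r : ℕ) : ℝ) := by
      rw [Nat.cast_sub (by omega)]
      push_cast
      linarith [Nat.lt_floor_add_one x]
    calc (1 - r / x) ^ r = (x - r) ^ r / x ^ r := by rw [← div_pow, sub_div, div_self hx.ne']
      _ ≤ ((⌊x⌋₊ + 1 - r : ℕ) : ℝ) ^ r / x ^ r := by gcongr
      _ ≤ (⌊x⌋₊.descFactorial r : ℝ) / x ^ r := by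
        gcongr; exact_mod_cast Nat.pow_sub_le_descFactorial _ _
  · filter_upwards [eventually_gt_atTop 0] with x hx
    rw [div_le_one (by positivity)]
    calc (⌊x⌋₊.descFactorial r : ℝ) ≤ (⌊x⌋₊ : ℝ) ^ r := by
          exact_mod_cast Nat.descFactorial_le_pow _ _
      _ ≤ x ^ r := by gcongr; exact Nat.floor_le hx.le

lemma tendsto_choose_floor_div_pow (r : ℕ) :
    Tendsto (fun x : ℝ => (⌊x⌋₊.choose r : ℝ) / x ^ r) atTop (𝓝 (r.factorial : ℝ)⁻¹) := by
  have h := (tendsto_descFactorial_floor_div_pow r).div_const (r.factorial : ℝ)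
  rw [one_div] at h
  refine h.congr fun x => ?_
  rw [Nat.descFactorial_eq_factorial_mul_choose, Nat.cast_mul]
  field_simp

section Threshold

variable {ι : Type*} {l : Filter ι} {N p t : ι → ℝ} {r : ℕ}

lemma tendsto_binomTail_floor_div_pow (hp0 : ∀ i, 0 < p i) (hp1 : ∀ i, p i ≤ 1)
    (ht : Tendsto t l atTop) (htp : Tendsto (fun i => t i * p i) l (𝓝 0)) :
    Tendsto (fun i => binomTail (p i) ⌊t i⌋₊ r / (t i * p i) ^ r) l
      (𝓝 (r.factorial : ℝ)⁻¹) := by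
  have hchoose : Tendsto (fun i => (⌊t i⌋₊.choose r : ℝ) / t i ^ r) l
      (𝓝 (r.factorial : ℝ)⁻¹) := (tendsto_choose_floor_div_pow r).comp ht
  have hlower : Tendsto (fun i => (⌊t i⌋₊.choose r : ℝ) / t i ^ r * (1 - t i * p i)) l
      (𝓝 (r.factorial : ℝ)⁻¹) := by
    simpa using hchoose.mul ((tendsto_const_nhds (x := (1 : ℝ))).sub htp)
  have hrescale : ∀ i, 0 < t i →
      (⌊t i⌋₊.choose r : ℝ) / t i ^ r = ⌊t i⌋₊.choose r * p i ^ r / (t i * p i) ^ r :=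
    fun i hti => by rw [mul_pow, mul_div_mul_right _ _ (pow_ne_zero _ (hp0 i).ne')]
  refine tendsto_of_tendsto_of_tendsto_of_le_of_le' hlower hchoose ?_ ?_
  · filter_upwards [ht.eventually_gt_atTop 0] with i hti
    have hpi := hp0 i
    have hfloor : (⌊t i⌋₊ : ℝ) * p i ≤ t i * p i :=
      mul_le_mul_of_nonneg_right (Nat.floor_le hti.le) hpi.le
    rw [hrescale i hti, div_mul_eq_mul_div]
    refine div_le_div_of_nonneg_right ?_ (by positivity)
    calc _ ≤ ⌊t i⌋₊.choose r * p i ^ r * (1 - ⌊t i⌋₊ * p i) := by gcongr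
      _ ≤ _ := choose_mul_pow_mul_one_sub_le_binomTail hpi.le (hp1 i) _ _
  · filter_upwards [ht.eventually_gt_atTop 0] with i hti
    have hpi := hp0 i
    rw [hrescale i hti]
    exact div_le_div_of_nonneg_right (binomTail_le_choose_mul_pow hpi.le (hp1 i) _ _)
      (by positivity)

lemma tendsto_mul_binomTail_floor_div (hr : r ≠ 0) (hp0 : ∀ i, 0 < p i) (hp1 : ∀ i, p i ≤ 1)
    (ht : Tendsto t l atTop) (htp : Tendsto (fun i => t i * p i) l (𝓝 0))
    (hN : ∀ᶠ i in l, N i * p i ^ r * t i ^ (r - 1) = (r - 1).factorial) :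
    Tendsto (fun i => N i * binomTail (p i) ⌊t i⌋₊ r / t i) l (𝓝 (r : ℝ)⁻¹) := by
  have h := (tendsto_binomTail_floor_div_pow (r := r) hp0 hp1 ht htp).const_mul
    ((r - 1).factorial : ℝ)
  rw [← Nat.mul_factorial_pred hr, Nat.cast_mul, mul_inv, mul_left_comm,
    mul_inv_cancel₀ (by positivity), mul_one] at h
  refine h.congr' ?_
  filter_upwards [hN, ht.eventually_gt_atTop 0] with i hNi hti
  have hpi := hp0 i
  have htr : t i ^ r = t i ^ (r - 1) * t i := by rw [← pow_succ, Nat.sub_one_add_one hr]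
  rw [← hNi, mul_pow, htr]
  field_simp

lemma tendsto_binomTail_floor (hr : r ≠ 0) (hp0 : ∀ i, 0 < p i) (hp1 : ∀ i, p i ≤ 1)
    (ht : Tendsto t l atTop) (htp : Tendsto (fun i => t i * p i) l (𝓝 0)) :
    Tendsto (fun i => binomTail (p i) ⌊t i⌋₊ r) l (𝓝 0) := by
  have h := (tendsto_binomTail_floor_div_pow (r := r) hp0 hp1 ht htp).mul (htp.pow r)
  rw [zero_pow hr, mul_zero] at h
  refine h.congr' ?_
  filter_upwards [ht.eventually_gt_atTop 0] with i hti
  exact div_mul_cancel₀ _ (pow_ne_zero _ (mul_pos hti (hp0 i)).ne')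

lemma tendsto_floor_sub_mul_binomTail_div (hr : 2 ≤ r) (hp0 : ∀ i, 0 < p i)
    (hp1 : ∀ i, p i ≤ 1) (ht : Tendsto t l atTop) (htp : Tendsto (fun i => t i * p i) l (𝓝 0))
    (hN : ∀ᶠ i in l, N i * p i ^ r * t i ^ (r - 1) = (r - 1).factorial) :
    Tendsto (fun i => ((⌊t i⌋₊ : ℝ) - N i * binomTail (p i) ⌊t i⌋₊ r) /
      (1 - binomTail (p i) ⌊t i⌋₊ r) / ((1 - 1 / r) * t i)) l (𝓝 1) := by
  have hr' : r ≠ 0 := by omega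
  have hgap : (1 : ℝ) - 1 / r ≠ 0 := by
    rw [sub_ne_zero, ne_comm, one_div, inv_ne_one]; exact_mod_cast (by omega : r ≠ 1)
  have h := ((tendsto_nat_floor_div_atTop.comp ht).sub
    (tendsto_mul_binomTail_floor_div hr' hp0 hp1 ht htp hN)).div
    (((tendsto_const_nhds (x := (1 : ℝ))).sub (tendsto_binomTail_floor hr' hp0 hp1 ht htp)).mul
      (tendsto_const_nhds (x := 1 - 1 / (r : ℝ)))) (by simpa using hgap)
  rw [sub_zero, one_mul, one_div, div_self (by simpa using hgap)] at h
  refine h.congr fun i => ?_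
  simp only [Pi.div_apply, Function.comp_apply]
  rw [div_sub_div_same, div_div, div_div, one_div]
  ring

lemma tendsto_floor_sub_mul_binomTail_div_of_pow_eq (hr : 2 ≤ r) (hp0 : ∀ i, 0 < p i)
    (hp1 : ∀ i, p i ≤ 1) (hNpos : ∀ᶠ i in l, 0 < N i)
    (hNp : Tendsto (fun i => N i * p i) l atTop)
    (hNpr : Tendsto (fun i => N i * p i ^ r) l (𝓝 0)) (ht0 : ∀ i, 0 ≤ t i)
    (ht_pow : ∀ i, t i ^ (r - 1) = (r - 1).factorial / (N i * p i ^ r)) :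
    Tendsto (fun i => ((⌊t i⌋₊ : ℝ) - N i * binomTail (p i) ⌊t i⌋₊ r) /
      (1 - binomTail (p i) ⌊t i⌋₊ r) / ((1 - 1 / r) * t i)) l (𝓝 1) := by
  have hk : r - 1 ≠ 0 := by omega
  have hNpr_pos : ∀ᶠ i in l, 0 < N i * p i ^ r :=
    hNpos.mono fun i hi => by have := hp0 i; positivity
  have ht : Tendsto t l atTop := by
    refine tendsto_atTop_of_tendsto_pow hk ht0 ?_
    simp_rw [ht_pow, div_eq_mul_inv]
    exact (tendsto_nhdsWithin_iff.2 ⟨hNpr, hNpr_pos⟩).inv_tendsto_nhdsGT_zero.const_mul_atTop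
      (by positivity)
  have htp : Tendsto (fun i => t i * p i) l (𝓝 0) := by
    refine tendsto_zero_of_tendsto_pow hk (fun i => mul_nonneg (ht0 i) (hp0 i).le) ?_
    refine ((tendsto_const_nhds (x := ((r - 1).factorial : ℝ))).div_atTop hNp).congr' ?_
    filter_upwards [hNpos] with i hi
    have hpi := hp0 i
    have hpr : p i ^ r = p i ^ (r - 1) * p i := by rw [← pow_succ, Nat.sub_add_cancel (by omega)]
    rw [mul_pow, ht_pow, hpr]
    field_simp
  refine tendsto_floor_sub_mul_binomTail_div hr hp0 hp1 ht htp ?_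
  filter_upwards [hNpr_pos] with i hi
  rw [ht_pow, mul_div_cancel₀ _ hi.ne']

end Threshold

/-- With `a_c = -min_{t ≤ t₀} (nπ̂(t) - t)/(1 - π̂(t))` and `t₁ = ((r-1)!/(npʳ))^(1/(r-1))`,
one has `a_c ≥ (t₁ - nπ̂(t₁))/(1 - π̂(t₁)) = (1+o(1))(1 - 1/r) t₁`, and `a_c = Ω(t₀)`. -/
theorem ac_lower (r : ℕ) (hr : 2 ≤ r) (p : ℕ → ℝ) (hp : ∀ n, p n ∈ Set.Ioo (0 : ℝ) 1)
    (hnp : Tendsto (fun n : ℕ => n * p n) atTop atTop)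
    (hnpr : Tendsto (fun n : ℕ => n * p n ^ r) atTop (nhds 0))
    (t0 t1 ac : ℕ → ℝ)
    (ht0 : ∀ n, t0 n = ((r.factorial : ℝ) / (n * p n ^ r)) ^ ((1 : ℝ) / (r - 1)))
    (ht1 : ∀ n, t1 n = (((r - 1).factorial : ℝ) / (n * p n ^ r)) ^ ((1 : ℝ) / (r - 1)))
    (hac : ∀ n, ac n = -((Finset.range (⌊t0 n⌋₊ + 1)).inf' Finset.nonempty_range_add_one
      (fun t => (n * binomTail (p n) t r - t) / (1 - binomTail (p n) t r)))) :
    (∀ᶠ n in atTop, ac n ≥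
      ((⌊t1 n⌋₊ : ℝ) - n * binomTail (p n) ⌊t1 n⌋₊ r) / (1 - binomTail (p n) ⌊t1 n⌋₊ r)) ∧
    Tendsto (fun n : ℕ =>
        (((⌊t1 n⌋₊ : ℝ) - n * binomTail (p n) ⌊t1 n⌋₊ r) / (1 - binomTail (p n) ⌊t1 n⌋₊ r)) /
          ((1 - 1 / r) * t1 n))
      atTop (nhds 1) ∧
    ∃ c : ℝ, 0 < c ∧ ∀ᶠ n in atTop, ac n ≥ c * t0 n := by
  have hp0 : ∀ n, 0 < p n := fun n => (hp n).1
  have hbase : ∀ n, 0 ≤ ((r - 1).factorial : ℝ) / (n * p n ^ r) := fun n => by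
    have := hp0 n; positivity
  have ht1_nonneg : ∀ n, 0 ≤ t1 n := fun n => ht1 n ▸ rpow_nonneg (hbase n) _
  have ht1_pow : ∀ n, t1 n ^ (r - 1) = ((r - 1).factorial : ℝ) / (n * p n ^ r) := fun n => by
    rw [ht1, one_div, ← Nat.cast_pred (by omega), rpow_inv_natCast_pow (hbase n) (by omega)]
  have ht0_eq : ∀ n, t0 n = (r : ℝ) ^ ((1 : ℝ) / (r - 1)) * t1 n := fun n => by
    rw [ht0, ht1, ← mul_rpow (by positivity) (hbase n), ← mul_div_assoc, ← Nat.cast_mul,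
      Nat.mul_factorial_pred (by omega)]
  have hscale : 1 ≤ (r : ℝ) ^ ((1 : ℝ) / (r - 1)) :=
    one_le_rpow (by exact_mod_cast (by omega : 1 ≤ r)) (div_nonneg zero_le_one
      (sub_nonneg.2 (by exact_mod_cast (by omega : 1 ≤ r))))
  have hratio := tendsto_floor_sub_mul_binomTail_div_of_pow_eq hr hp0 (fun n => (hp n).2.le)
    ((eventually_gt_atTop 0).mono fun n hn => Nat.cast_pos.2 hn) hnp hnpr ht1_nonneg ht1_pow
  have hac_ge : ∀ n, ac n ≥
      ((⌊t1 n⌋₊ : ℝ) - n * binomTail (p n) ⌊t1 n⌋₊ r) / (1 - binomTail (p n) ⌊t1 n⌋₊ r) :=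
    fun n => by
      have hfloor : ⌊t1 n⌋₊ ∈ range (⌊t0 n⌋₊ + 1) := mem_range.2 (Nat.lt_succ_of_le
        (Nat.floor_le_floor (ht0_eq n ▸ le_mul_of_one_le_left (ht1_nonneg n) hscale)))
      rw [hac, ge_iff_le, le_neg, ← neg_div, neg_sub]
      exact inf'_le _ hfloor
  have hgap : 0 < (1 : ℝ) - 1 / r := by
    rw [sub_pos, div_lt_one (by positivity)]; exact_mod_cast (by omega : 1 < r)
  refine ⟨.of_forall hac_ge, hratio, (1 - 1 / r) / 2 / (r : ℝ) ^ ((1 : ℝ) / (r - 1)),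
    by positivity, ?_⟩
  filter_upwards [eventually_half_le_of_tendsto_div hratio
    fun n => mul_nonneg hgap.le (ht1_nonneg n)] with n hn
  calc (1 - 1 / r) / 2 / (r : ℝ) ^ ((1 : ℝ) / (r - 1)) * t0 n
      = (1 - 1 / r) * t1 n / 2 := by rw [ht0_eq]; field_simp
    _ ≤ ac n := hn.trans (hac_ge n)
end

section
/- In G(n,p) with np → ∞, let r ≥ 2 be fixed and let U, W ⊂ [n] with |U| = ⌊n/(2^r r! √e)⌋. Then with probability at least 1 - exp(-Ω(p^{-1})), the number of vertices in [n] \ (U ∪ W) having fewer than r neighbours in U is at most p^{-1}. -/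
/-!
Call a vertex outside `U` bad if it has fewer than `r` neighbours in `U`. For a set `S` of such
vertices the neighbourhoods `N(v) ∩ U`, `v ∈ S`, are read off pairwise disjoint sets of edges, so
all of `S` is bad with probability `q ^ #S`, where `q = P(Bin(|U|, p) < r)`; a union bound over
`k`-sets gives `P(at least k bad vertices) ≤ C(n, k) q ^ k ≤ (e n q / k) ^ k`.
With `C = 2 ^ r r! √e`, `y = np / C` and `|U| = ⌊n / C⌋` one has `q ≤ r y ^ (r - 1) e ^ (r - y)`,
so `e² n p q → 0` as `y → ∞`. Taking `k = ⌊1/p⌋ + 1` then makes `e n q / k ≤ 1/e`, and the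
probability of more than `1/p` bad vertices is at most `e ^ (-k) ≤ e ^ (-1/p)`.
-/

open Filter Real Finset MeasureTheory
open scoped Nat

lemma Finset.sum_powerset_filter_card_lt {α M : Type*} [AddCommMonoid M] (s : Finset α) (r : ℕ)
    (f : ℕ → M) : ∑ A ∈ s.powerset with #A < r, f #A = ∑ j ∈ range r, (#s).choose j • f j := by
  classical
  rw [← sum_fiberwise_of_maps_to (g := card) (t := range r) (by simp)]
  refine sum_congr rfl fun j hj => ?_
  rw [filter_filter, sum_congr rfl fun A hA => by rw [(mem_filter.mp hA).2.2], sum_const,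
    ← card_powersetCard]
  congr 2
  ext A
  simp only [mem_filter, mem_powerset, mem_powersetCard, and_congr_right_iff]
  exact fun _ => and_iff_right_of_imp fun h => h ▸ mem_range.mp hj

lemma Finset.prod_ite_mem_const {α M : Type*} [DecidableEq α] [CommMonoid M] {s t : Finset α}
    (hts : t ⊆ s) (a b : M) : ∏ u ∈ s, (if u ∈ t then a else b) = a ^ #t * b ^ (#s - #t) := by
  rw [prod_ite, prod_const, prod_const, filter_mem_eq_inter, inter_eq_right.mpr hts, filter_not,
    filter_mem_eq_inter, inter_eq_right.mpr hts, card_sdiff_of_subset hts]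

lemma MeasureTheory.Measure.pi_setOf_forall_apply_eq {ι α κ : Type*} [Fintype ι]
    [MeasurableSpace α] {ν : ι → Measure α} [∀ i, IsProbabilityMeasure (ν i)] {g : κ → ι}
    {T : Finset κ} (hg : Set.InjOn g T) (b : κ → α) :
    Measure.pi ν {ω | ∀ j ∈ T, ω (g j) = b j} = ∏ j ∈ T, ν (g j) {b j} := by
  classical
  set t : ι → Set α := fun i => {a | ∀ j ∈ T, g j = i → a = b j}
  have ht : ∀ j ∈ T, t (g j) = {b j} := fun j hj => by
    ext a
    exact ⟨fun h => h j hj rfl, fun h j' hj' hg' => h.trans (by rw [hg hj' hj hg'])⟩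
  have hset : {ω : ι → α | ∀ j ∈ T, ω (g j) = b j} = (T.image g : Set ι).pi t := by
    ext ω
    simp only [Set.mem_ofPred_eq, Set.mem_pi, coe_image, Set.forall_mem_image, t]
    exact ⟨fun h _ _ j hj hgj => hgj ▸ h j hj, fun h j hj => h hj j hj rfl⟩
  rw [hset, Measure.pi_pi_finset, prod_image hg]
  exact prod_congr rfl fun j hj => by rw [ht j hj]

lemma PMF.bernoulli_toMeasure_singleton {p : ℝ} (hp0 : 0 ≤ p) (hp1 : p ≤ 1) (b : Bool) :
    (PMF.bernoulli p.toNNReal (Real.toNNReal_le_one.mpr hp1)).toMeasure {b} =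
      ENNReal.ofReal (if b then p else 1 - p) := by
  rw [PMF.toMeasure_apply_singleton _ _ (measurableSet_singleton _), PMF.bernoulli_apply]
  cases b
  · rw [if_neg Bool.false_ne_true, ENNReal.ofReal_sub 1 hp0, ENNReal.ofReal_one, cond_false,
      ENNReal.coe_sub, ENNReal.coe_one]
    rfl
  · rfl

lemma MeasureTheory.one_sub_le_toReal_of_measure_compl_le {Ω : Type*} [MeasurableSpace Ω]
    {μ : Measure Ω} [IsProbabilityMeasure μ] {s : Set Ω} (hs : MeasurableSet s) {ε : ℝ}
    (hε : 0 ≤ ε) (h : μ sᶜ ≤ ENNReal.ofReal ε) : 1 - ε ≤ (μ s).toReal := by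
  have hcompl := ENNReal.toReal_le_of_le_ofReal hε h
  rw [← measureReal_def, probReal_compl_eq_one_sub hs] at hcompl
  rw [← measureReal_def]
  linarith

noncomputable def binomialLowerTail (m r : ℕ) (p : ℝ) : ℝ :=
  ∑ j ∈ range r, m.choose j * p ^ j * (1 - p) ^ (m - j)

lemma binomialLowerTail_nonneg {m r : ℕ} {p : ℝ} (hp0 : 0 ≤ p) (hp1 : p ≤ 1) :
    0 ≤ binomialLowerTail m r p :=
  sum_nonneg fun _ _ => mul_nonneg (by positivity) (pow_nonneg (sub_nonneg.mpr hp1) _)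

lemma binomialLowerTail_le {m r : ℕ} {p y : ℝ} (hp0 : 0 ≤ p) (hp1 : p ≤ 1) (hy : 1 ≤ y)
    (hmy : m * p ≤ y) (hym : y ≤ (m + 1) * p) :
    binomialLowerTail m r p ≤ r * (y ^ (r - 1) * exp (r - y)) := by
  have hdecay : (1 - p) ^ (m + 1 - r) ≤ exp (r - y) := calc
    (1 - p) ^ (m + 1 - r) ≤ exp (-p) ^ (m + 1 - r) :=
      pow_le_pow_left₀ (by linarith) (one_sub_le_exp_neg p) _
    _ = exp (-(p * (m + 1 - r : ℕ))) := by rw [← exp_nat_mul]; ring_nf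
    _ ≤ exp (r - y) := by
      have hcast : (m + 1 : ℝ) - r ≤ (m + 1 - r : ℕ) := by
        have := Nat.cast_le (α := ℝ) |>.mpr (le_tsub_add : m + 1 ≤ m + 1 - r + r)
        push_cast at this
        linarith
      have : p * r ≤ r := by nlinarith
      gcongr
      nlinarith
  calc binomialLowerTail m r p ≤ ∑ _j ∈ range r, y ^ (r - 1) * exp (r - y) :=
        sum_le_sum fun j hj => ?_
    _ = r * (y ^ (r - 1) * exp (r - y)) := by simp
  have hjr : j < r := mem_range.mp hj
  calc (m.choose j : ℝ) * p ^ j * (1 - p) ^ (m - j) ≤ (m * p) ^ j * (1 - p) ^ (m + 1 - r) := by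
        have h1p : 0 ≤ 1 - p := by linarith
        rw [mul_pow]
        refine mul_le_mul (mul_le_mul_of_nonneg_right ?_ (by positivity))
          (pow_le_pow_of_le_one h1p (by linarith) (by omega)) (by positivity) (by positivity)
        exact_mod_cast Nat.choose_le_pow m j
    _ ≤ y ^ (r - 1) * exp (r - y) := by
        gcongr
        calc (m * p) ^ j ≤ y ^ j := by gcongr
          _ ≤ y ^ (r - 1) := pow_le_pow_right₀ hy (by omega)

lemma eventually_exp_two_mul_binomialLowerTail_le (r : ℕ) {C : ℝ} (hC : 0 < C) {p : ℕ → ℝ}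
    (hp : ∀ n, p n ∈ Set.Ioo (0 : ℝ) 1) (hnp : Tendsto (fun n : ℕ => n * p n) atTop atTop) :
    ∀ᶠ n : ℕ in atTop, exp 2 * n * binomialLowerTail ⌊(n : ℝ) / C⌋₊ r (p n) ≤ (p n)⁻¹ := by
  set y : ℕ → ℝ := fun n => n * p n / C
  have hy : Tendsto y atTop atTop := hnp.atTop_div_const hC
  have hdecay : Tendsto (fun n => r * C * exp (r + 2) * (y n ^ (r - 1 + 1) * exp (-y n)))
      atTop (nhds 0) := by
    simpa using ((tendsto_pow_mul_exp_neg_atTop_nhds_zero (r - 1 + 1)).comp hy).const_mul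
      (r * C * exp (r + 2))
  filter_upwards [hy.eventually_ge_atTop 1, hdecay.eventually_lt_const one_pos] with n hy1 hsmall
  obtain ⟨hp0, hp1⟩ := hp n
  set m := ⌊(n : ℝ) / C⌋₊
  have hyn : y n = n / C * p n := by simp only [y]; ring
  have hmy : m * p n ≤ y n := by rw [hyn]; gcongr; exact Nat.floor_le (by positivity)
  have hym : y n ≤ (m + 1) * p n := by rw [hyn]; gcongr; exact (Nat.lt_floor_add_one _).le
  have htail := binomialLowerTail_le (r := r) hp0.le hp1.le hy1 hmy hym
  rw [inv_eq_one_div, le_div_iff₀ hp0]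
  calc exp 2 * n * binomialLowerTail m r (p n) * p n
      = exp 2 * C * y n * binomialLowerTail m r (p n) := by simp only [y]; field_simp
    _ ≤ exp 2 * C * y n * (r * (y n ^ (r - 1) * exp (r - y n))) := by gcongr
    _ = r * C * exp (r + 2) * (y n ^ (r - 1 + 1) * exp (-y n)) := by
        rw [pow_succ, sub_eq_add_neg, exp_add, exp_add]; ring
    _ ≤ 1 := hsmall.le

lemma choose_mul_pow_le_exp_neg {n k : ℕ} {q : ℝ} (hq : 0 ≤ q) (h : exp 2 * n * q ≤ k) :
    n.choose k * q ^ k ≤ exp (-k) := calc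
  (n.choose k : ℝ) * q ^ k ≤ n ^ k / k ! * q ^ k := by gcongr; exact Nat.choose_le_pow_div k n
  _ = (n * q) ^ k / k ! := by ring
  _ ≤ (exp (-2) * k) ^ k / k ! := by
      have hnq : n * q ≤ exp (-2) * k := by
        rw [exp_neg, ← div_eq_inv_mul, le_div_iff₀ (exp_pos 2)]
        linarith
      gcongr
  _ = exp (-2 * k) * (k ^ k / k !) := by rw [mul_pow, ← exp_nat_mul]; ring_nf
  _ ≤ exp (-2 * k) * exp k := by gcongr; exact Real.pow_div_factorial_le_exp _ (by positivity) k
  _ = exp (-k) := by rw [← exp_add]; ring_nf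

noncomputable def gnp (V : Type*) [Fintype V] [DecidableEq V] (p : ℝ) (hp : p ≤ 1) :
    Measure (Sym2 V → Bool) :=
  Measure.pi fun _ => (PMF.bernoulli p.toNNReal (Real.toNNReal_le_one.mpr hp)).toMeasure

section Gnp

variable {V : Type*} [Fintype V] [DecidableEq V]

def neighborsIn (ω : Sym2 V → Bool) (U : Finset V) (v : V) : Finset V :=
  U.filter fun u => ω s(u, v) = true

lemma gnp_setOf_forall_neighborsIn_eq {p : ℝ} (hp0 : 0 ≤ p) (hp1 : p ≤ 1) {S U : Finset V}
    (hSU : Disjoint S U) {F : S → Finset V} (hF : ∀ v, F v ⊆ U) :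
    gnp V p hp1 {ω | ∀ v : S, neighborsIn ω U v = F v} =
      ENNReal.ofReal (∏ v : S, p ^ #(F v) * (1 - p) ^ (#U - #(F v))) := by
  have hset : {ω | ∀ v : S, neighborsIn ω U v = F v} =
      {ω | ∀ x ∈ (univ : Finset S) ×ˢ U, ω s(x.2, x.1) = decide (x.2 ∈ F x.1)} := by
    ext ω
    simp only [Set.mem_ofPred_eq, mem_product, mem_univ, true_and, Prod.forall]
    refine forall_congr' fun v => ?_
    simp only [neighborsIn, Finset.ext_iff, mem_filter]
    have := hF v
    grind
  have hinj : Set.InjOn (fun x : S × V => s(x.2, (x.1 : V))) ↑((univ : Finset S) ×ˢ U) := by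
    rintro ⟨v, u⟩ h ⟨v', u'⟩ h' heq
    simp only [coe_product, coe_univ, Set.mem_prod, Set.mem_univ, true_and, mem_coe] at h h'
    rcases Sym2.eq_iff.mp heq with ⟨h1, h2⟩ | ⟨h1, -⟩
    · exact Prod.ext (Subtype.ext h2) h1
    · exact absurd (h1 ▸ h) (disjoint_left.mp hSU v'.2)
  have h1p : 0 ≤ 1 - p := by linarith
  rw [hset, gnp, Measure.pi_setOf_forall_apply_eq hinj, prod_product,
    ENNReal.ofReal_prod_of_nonneg fun v _ => by positivity]
  refine prod_congr rfl fun v _ => ?_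
  rw [← prod_ite_mem_const (hF v),
    ENNReal.ofReal_prod_of_nonneg fun u _ => by split_ifs <;> assumption]
  refine prod_congr rfl fun u _ => ?_
  simp only [PMF.bernoulli_toMeasure_singleton hp0 hp1, decide_eq_true_eq]

lemma gnp_setOf_forall_card_neighborsIn_lt_le (r : ℕ) {p : ℝ} (hp0 : 0 ≤ p) (hp1 : p ≤ 1)
    {S U : Finset V} (hSU : Disjoint S U) :
    gnp V p hp1 {ω | ∀ v ∈ S, #(neighborsIn ω U v) < r} ≤
      ENNReal.ofReal (binomialLowerTail #U r p) ^ #S := by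
  set small := U.powerset.filter fun A => #A < r with hsmall
  set patterns := Fintype.piFinset fun _ : S => small with hpatterns
  have hcover : {ω | ∀ v ∈ S, #(neighborsIn ω U v) < r} ⊆
      ⋃ F ∈ patterns, {ω | ∀ v : S, neighborsIn ω U v = F v} := by
    intro ω hω
    simp only [Set.mem_iUnion]
    refine ⟨fun v => neighborsIn ω U v, Fintype.mem_piFinset.mpr fun v => ?_, fun v => rfl⟩
    exact mem_filter.mpr ⟨mem_powerset.mpr (filter_subset _ _), hω v v.2⟩
  have htail : binomialLowerTail #U r p = ∑ A ∈ small, p ^ #A * (1 - p) ^ (#U - #A) := by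
    rw [hsmall, sum_powerset_filter_card_lt U r fun j => p ^ j * (1 - p) ^ (#U - j),
      binomialLowerTail]
    simp only [nsmul_eq_mul, mul_assoc]
  have h1p : 0 ≤ 1 - p := by linarith
  calc _ ≤ ∑ F ∈ patterns, gnp V p hp1 {ω | ∀ v : S, neighborsIn ω U v = F v} :=
        (measure_mono hcover).trans (measure_biUnion_finset_le _ _)
    _ = ∑ F ∈ patterns, ENNReal.ofReal (∏ v : S, p ^ #(F v) * (1 - p) ^ (#U - #(F v))) :=
        sum_congr rfl fun F hF => gnp_setOf_forall_neighborsIn_eq hp0 hp1 hSU fun v =>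
          mem_powerset.mp (mem_filter.mp (Fintype.mem_piFinset.mp hF v)).1
    _ = ENNReal.ofReal (binomialLowerTail #U r p) ^ #S := by
        rw [← ENNReal.ofReal_sum_of_nonneg fun _ _ => by positivity, hpatterns,
          sum_prod_piFinset small fun _ A => p ^ #A * (1 - p) ^ (#U - #A),
          prod_const, htail, card_univ, Fintype.card_coe, ENNReal.ofReal_pow]
        positivity

lemma gnp_setOf_le_card_filter_card_neighborsIn_lt_le (r k : ℕ) {p : ℝ} (hp0 : 0 ≤ p)
    (hp1 : p ≤ 1) (U : Finset V) :
    gnp V p hp1 {ω | k ≤ #{v | v ∉ U ∧ #(neighborsIn ω U v) < r}} ≤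
      (Fintype.card V).choose k * ENNReal.ofReal (binomialLowerTail #U r p) ^ k := by
  have hcover : {ω | k ≤ #{v | v ∉ U ∧ #(neighborsIn ω U v) < r}} ⊆
      ⋃ S ∈ Uᶜ.powersetCard k, {ω | ∀ v ∈ S, #(neighborsIn ω U v) < r} := by
    intro ω hω
    obtain ⟨S, hS, hSk⟩ := exists_subset_card_eq hω
    simp only [Set.mem_iUnion]
    refine ⟨S, mem_powersetCard.mpr ⟨fun v hv => ?_, hSk⟩, fun v hv => (mem_filter.mp (hS hv)).2.2⟩
    exact mem_compl.mpr (mem_filter.mp (hS hv)).2.1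
  calc _ ≤ ∑ S ∈ Uᶜ.powersetCard k, gnp V p hp1 {ω | ∀ v ∈ S, #(neighborsIn ω U v) < r} :=
        (measure_mono hcover).trans (measure_biUnion_finset_le _ _)
    _ ≤ ∑ S ∈ Uᶜ.powersetCard k, ENNReal.ofReal (binomialLowerTail #U r p) ^ k := by
        refine sum_le_sum fun S hS => ?_
        obtain ⟨hSU, hSk⟩ := mem_powersetCard.mp hS
        simpa only [hSk] using gnp_setOf_forall_card_neighborsIn_lt_le r hp0 hp1
          (subset_compl_iff_disjoint_right.mp hSU)
    _ ≤ (Fintype.card V).choose k * ENNReal.ofReal (binomialLowerTail #U r p) ^ k := by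
        rw [sum_const, card_powersetCard, nsmul_eq_mul]
        gcongr
        exact card_le_univ Uᶜ

end Gnp

theorem few_uninfected_general (r : ℕ) (p : ℕ → ℝ) (hp : ∀ n, p n ∈ Set.Ioo (0 : ℝ) 1)
    (hnp : Tendsto (fun n : ℕ => n * p n) atTop atTop)
    (U W : ∀ n : ℕ, Finset (Fin n))
    (hU : ∀ n, (U n).card = ⌊(n : ℝ) / (2 ^ r * r.factorial * Real.sqrt (Real.exp 1))⌋₊) :
    ∃ c : ℝ, 0 < c ∧ ∀ᶠ n : ℕ in atTop,
      1 - Real.exp (-c * (p n)⁻¹) ≤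
        ((Measure.pi fun _ : Sym2 (Fin n) =>
            (PMF.bernoulli (Real.toNNReal (p n))
              (Real.toNNReal_le_one.mpr (hp n).2.le)).toMeasure)
          {ω | ((Finset.univ.filter fun v : Fin n => v ∉ U n ∧ v ∉ W n ∧
                ((U n).filter fun u => ω s(u, v) = true).card < r).card : ℝ) ≤
              (p n)⁻¹}).toReal := by
  refine ⟨1, one_pos, ?_⟩
  have hC : (0 : ℝ) < 2 ^ r * r.factorial * √(exp 1) := by positivity
  filter_upwards [eventually_exp_two_mul_binomialLowerTail_le r hC hp hnp] with n hn
  obtain ⟨hp0, hp1⟩ := hp n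
  have htail := binomialLowerTail_nonneg (m := (U n).card) (r := r) hp0.le hp1.le
  set k := ⌊(p n)⁻¹⌋₊ + 1
  have hk : (p n)⁻¹ ≤ k := by simpa [k] using (Nat.lt_floor_add_one (p n)⁻¹).le
  have hmany : gnp (Fin n) (p n) hp1.le {ω | k ≤ #{v | v ∉ U n ∧ #(neighborsIn ω (U n) v) < r}}
      ≤ ENNReal.ofReal (exp (-(p n)⁻¹)) := by
    refine (gnp_setOf_le_card_filter_card_neighborsIn_lt_le r k hp0.le hp1.le (U n)).trans ?_
    rw [← ENNReal.ofReal_natCast, ← ENNReal.ofReal_pow htail, ← ENNReal.ofReal_mul (by positivity)]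
    refine ENNReal.ofReal_le_ofReal ((choose_mul_pow_le_exp_neg htail ?_).trans ?_)
    · rw [Fintype.card_fin, hU n]
      exact hn.trans hk
    · exact exp_le_exp.mpr (neg_le_neg hk)
  rw [neg_one_mul]
  refine one_sub_le_toReal_of_measure_compl_le (Set.toFinite _).measurableSet (exp_pos _).le
    ((measure_mono fun ω hω => ?_).trans hmany)
  have hlt : ⌊(p n)⁻¹⌋₊ < #{v | v ∉ U n ∧ v ∉ W n ∧ #(neighborsIn ω (U n) v) < r} :=
    (Nat.floor_lt (inv_nonneg.mpr hp0.le)).mpr (not_le.mp hω)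
  exact hlt.trans_le (card_le_card fun v hv => by simp only [mem_filter] at hv ⊢; tauto)

/-- In `G(n,p)` (modelled by independent Bernoulli(p) labels on the unordered pairs of `[n]`),
with `|U| = ⌊n/(2^r r! √e)⌋` and `np → ∞`, with probability at least `1 - exp(-Ω(p⁻¹))` at
most `p⁻¹` vertices of `[n] \ (U ∪ W)` have fewer than `r` neighbours in `U`. -/
theorem few_uninfected (r : ℕ) (hr : 2 ≤ r) (p : ℕ → ℝ) (hp : ∀ n, p n ∈ Set.Ioo (0 : ℝ) 1)
    (hnp : Tendsto (fun n : ℕ => n * p n) atTop atTop)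
    (hp0 : Tendsto p atTop (nhds 0))
    (U W : ∀ n : ℕ, Finset (Fin n))
    (hU : ∀ n, (U n).card = ⌊(n : ℝ) / (2 ^ r * r.factorial * Real.sqrt (Real.exp 1))⌋₊) :
    ∃ c : ℝ, 0 < c ∧ ∀ᶠ n : ℕ in atTop,
      1 - Real.exp (-c * (p n)⁻¹) ≤
        ((Measure.pi fun _ : Sym2 (Fin n) =>
            (PMF.bernoulli (Real.toNNReal (p n))
              (Real.toNNReal_le_one.mpr (hp n).2.le)).toMeasure)
          {ω | ((Finset.univ.filter fun v : Fin n => v ∉ U n ∧ v ∉ W n ∧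
                ((U n).filter fun u => ω s(u, v) = true).card < r).card : ℝ) ≤
              (p n)⁻¹}).toReal :=
  few_uninfected_general r p hp hnp U W hU
end

section
/- For c > 1, the equation 1 - ρ = e^{-cρ} has a unique solution ρ in the open interval (0,1). -/
/-!
Let `G ρ = exp (-(c ρ)) - (1 - ρ)`. It is strictly convex, `G 0 = 0`, `G' 0 = 1 - c < 0` and
`G 1 = exp (-c) > 0`; so `G` is negative just to the right of `0` and the intermediate value
theorem gives a zero in `(0, 1)`. Since a strictly convex function takes the value `G 0` at most
once to the right of `0`, that zero is unique.
-/

open Real Set Filter Topology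

theorem StrictConvexOn.comp_linearMap_of_injective {𝕜 E F β : Type*} [Semiring 𝕜] [PartialOrder 𝕜]
    [AddCommMonoid E] [AddCommMonoid F] [AddCommMonoid β] [PartialOrder β]
    [Module 𝕜 E] [Module 𝕜 F] [SMul 𝕜 β] {f : F → β} {s : Set F}
    (hf : StrictConvexOn 𝕜 s f) {g : E →ₗ[𝕜] F} (hg : Function.Injective g) :
    StrictConvexOn 𝕜 (g ⁻¹' s) (f ∘ g) :=
  ⟨hf.1.linear_preimage g, fun x hx y hy hxy a b ha hb hab => by
    simpa using hf.2 hx hy (hg.ne hxy) ha hb hab⟩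

theorem StrictConvexOn.eq_of_apply_eq_of_lt {𝕜 β : Type*} [Field 𝕜] [LinearOrder 𝕜]
    [IsStrictOrderedRing 𝕜] [AddCommMonoid β] [LinearOrder β] [IsOrderedAddMonoid β]
    [Module 𝕜 β] [PosSMulStrictMono 𝕜 β] {s : Set 𝕜} {f : 𝕜 → β} (hf : StrictConvexOn 𝕜 s f)
    {x y z : 𝕜} (hx : x ∈ s) (hy : y ∈ s) (hz : z ∈ s) (hxy : x < y) (hxz : x < z)
    (hfy : f y = f x) (hfz : f z = f x) : y = z := by
  have lt_of_mem_Ioo : ∀ {u v}, u ∈ s → v ∈ s → x < u → u < v → f v = f x → f u < f x :=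
    fun hu hv hxu huv hfv => by
      simpa [hfv] using hf.lt_on_openSegment hx hv (hxu.trans huv).ne
        (Ioo_subset_openSegment ⟨hxu, huv⟩)
  rcases lt_trichotomy y z with h | h | h
  · exact absurd hfy (lt_of_mem_Ioo hy hz hxy h hfz).ne
  · exact h
  · exact absurd hfz (lt_of_mem_Ioo hz hy hxz h hfy).ne

theorem HasDerivWithinAt.eventually_nhdsGT_lt_of_neg {f : ℝ → ℝ} {f' x : ℝ}
    (hf : HasDerivWithinAt f f' (Ioi x) x) (hf' : f' < 0) : ∀ᶠ y in 𝓝[>] x, f y < f x := by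
  filter_upwards [hf.limsup_slope_le' (lt_irrefl x) hf', self_mem_nhdsWithin] with y hslope hy
  rw [slope_def_field, div_lt_iff₀ (sub_pos.2 hy), zero_mul, sub_neg] at hslope
  exact hslope

theorem strictConvexOn_exp_neg_mul_sub_one_sub {c : ℝ} (hc : c ≠ 0) :
    StrictConvexOn ℝ univ fun ρ => exp (-(c * ρ)) - (1 - ρ) := by
  have hexp : StrictConvexOn ℝ univ fun ρ => exp (-(c * ρ)) := by
    simpa [Function.comp_def] using strictConvexOn_exp.comp_linearMap_of_injective
      (g := LinearMap.mul ℝ ℝ (-c)) (mul_right_injective₀ (neg_ne_zero.2 hc))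
  exact hexp.sub_concaveOn ((concaveOn_const 1 convex_univ).sub (convexOn_id convex_univ))

theorem exists_mem_Ioo_one_sub_eq_exp_neg_mul {c : ℝ} (hc : 1 < c) :
    ∃ ρ ∈ Ioo (0 : ℝ) 1, 1 - ρ = exp (-(c * ρ)) := by
  set G := fun ρ : ℝ => exp (-(c * ρ)) - (1 - ρ)
  have hG0 : G 0 = 0 := by simp [G]
  have hG1 : 0 < G 1 := by simp [G, exp_pos]
  have hG'0 : HasDerivAt G (1 - c) 0 := by
    refine (((hasDerivAt_id' (0 : ℝ)).const_mul c).fun_neg.exp.fun_sub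
      ((hasDerivAt_id' (0 : ℝ)).const_sub 1)).congr_deriv ?_
    simp only [mul_zero, neg_zero, exp_zero, mul_one, one_mul, sub_neg_eq_add]
    ring
  obtain ⟨a, hGa, ha⟩ := ((hG'0.hasDerivWithinAt.eventually_nhdsGT_lt_of_neg (by linarith)).and
    (Ioo_mem_nhdsGT zero_lt_one)).exists
  have hcont : ContinuousOn G (Icc a 1) := by fun_prop
  obtain ⟨ρ, hρ, hGρ⟩ := intermediate_value_Ioo ha.2.le hcont ⟨hG0 ▸ hGa, hG1⟩
  exact ⟨ρ, ⟨ha.1.trans hρ.1, hρ.2⟩, (sub_eq_zero.1 hGρ).symm⟩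

/-- For `c > 1`, the equation `1 - ρ = exp(-cρ)` has a unique solution `ρ ∈ (0,1)`. -/
theorem exists_unique_rho (c : ℝ) (hc : 1 < c) :
    ∃! ρ : ℝ, ρ ∈ Set.Ioo (0 : ℝ) 1 ∧ 1 - ρ = Real.exp (-(c * ρ)) := by
  obtain ⟨ρ, hρ, hρ_eq⟩ := exists_mem_Ioo_one_sub_eq_exp_neg_mul hc
  refine ⟨ρ, ⟨hρ, hρ_eq⟩, fun σ ⟨hσ, hσ_eq⟩ => ?_⟩
  exact (strictConvexOn_exp_neg_mul_sub_one_sub (zero_lt_one.trans hc).ne').eq_of_apply_eq_of_lt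
    (mem_univ 0) (mem_univ σ) (mem_univ ρ) hσ.1 hρ.1 (by simp [← hσ_eq]) (by simp [← hρ_eq])
end
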